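/- arXiv:1701.03407 — 3 statements merged into one kernel-verified Lean document; each statement's English description precedes it below -/
import Mathlib

section
/- For every closed arc J strictly contained in the unit circle and every δ > 0, there exists a polynomial P with complex coefficients such that P(0) = 1 and |P(t)| < δ for all t in J. -/
/-!
Rotate the arc so that its midpoint is `-1`; it then lies in `{exp (θ i) : cos θ ≤ β}` for some
`β < 1`. The Chebyshev polynomial `T_n` rescaled to `[-1, β]` is bounded by `1` there and has
leading coefficient `2 ^ (n - 1) (2 / (1 + β)) ^ n`. Its Joukowski lift `z ^ n p ((z + z⁻¹) / 2)`
is a polynomial with modulus `|p (cos θ)|` at `exp (θ i)` and value `lc p / 2 ^ n` at `0`, so after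
normalising it is `1` at `0` and at most `2 ((1 + β) / 2) ^ n` on the arc.
-/

open Polynomial Complex

lemma exists_natDegree_le_coeff_eq_abs_eval_le_one_on_Icc {a b : ℝ} (hab : a < b) (n : ℕ) :
    ∃ p : ℝ[X], p.natDegree ≤ n ∧ p.coeff n = 2 ^ (n - 1) * (2 / (b - a)) ^ n ∧
      ∀ x ∈ Set.Icc a b, |p.eval x| ≤ 1 := by
  have hba : 0 < b - a := sub_pos.2 hab
  have hu : 2 / (b - a) ≠ 0 := by positivity
  set q : ℝ[X] := C (2 / (b - a)) * X + C (-(a + b) / (b - a))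
  have hq : q.natDegree = 1 := natDegree_linear hu
  have hdeg : ((Chebyshev.T ℝ n).comp q).natDegree = n := by simp [natDegree_comp, hq]
  refine ⟨(Chebyshev.T ℝ n).comp q, hdeg.le, ?_, fun x hx => ?_⟩
  · have hlc := coeff_natDegree (p := (Chebyshev.T ℝ n).comp q)
    rw [hdeg] at hlc
    rw [hlc, leadingCoeff_comp (by simp [hq]), leadingCoeff_linear hu]
    simp
  · have hqx : q.eval x = (2 * x - (a + b)) / (b - a) := by
      simp only [q, eval_add, eval_mul, eval_C, eval_X]
      ring
    rw [eval_comp, hqx]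
    refine Chebyshev.abs_eval_T_real_le_one _ ?_
    rw [abs_div, abs_of_pos hba, div_le_one hba, abs_le]
    constructor <;> linarith [hx.1, hx.2]

-- `z ^ n * p ((z + z⁻¹) / 2)`, cleared of negative powers of `z`
noncomputable def joukowskiLift (n : ℕ) (p : ℝ[X]) : ℂ[X] :=
  ∑ k ∈ Finset.range (n + 1), C ((p.coeff k / 2 ^ k : ℝ) : ℂ) * X ^ (n - k) * (X ^ 2 + 1) ^ k

lemma eval_zero_joukowskiLift (n : ℕ) (p : ℝ[X]) :
    (joukowskiLift n p).eval 0 = ((p.coeff n / 2 ^ n : ℝ) : ℂ) := by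
  rw [joukowskiLift, eval_finsetSum, Finset.sum_eq_single n]
  · simp
  · intro k hk hkn
    have : n - k ≠ 0 := by rw [Finset.mem_range] at hk; omega
    simp [zero_pow this]
  · simp

lemma eval_joukowskiLift_exp {n : ℕ} {p : ℝ[X]} (hp : p.natDegree ≤ n) (θ : ℝ) :
    (joukowskiLift n p).eval (exp (θ * I)) = exp (θ * I) ^ n * ((p.eval (Real.cos θ) : ℝ) : ℂ) := by
  set z := exp (θ * I)
  have hsq : z ^ 2 + 1 = z * (2 * Real.cos θ) := by
    rw [ofReal_cos, two_cos, mul_add, sq, ← exp_add, ← exp_add]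
    simp
  have hterm : ∀ k ∈ Finset.range (n + 1), (C ((p.coeff k / 2 ^ k : ℝ) : ℂ) * X ^ (n - k) *
      (X ^ 2 + 1) ^ k).eval z = z ^ n * ((p.coeff k : ℂ) * (Real.cos θ : ℂ) ^ k) := by
    intro k hk
    have hkn : k ≤ n := Nat.lt_succ_iff.1 (Finset.mem_range.1 hk)
    simp only [eval_mul, eval_pow, eval_add, eval_one, eval_C, eval_X, hsq, mul_pow]
    rw [← pow_sub_mul_pow z hkn]
    push_cast
    field_simp
  rw [joukowskiLift, eval_finsetSum, Finset.sum_congr rfl hterm, ← Finset.mul_sum,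
    eval_eq_sum_range' (Nat.lt_succ_of_le hp)]
  push_cast
  rfl

lemma norm_eval_joukowskiLift_exp {n : ℕ} {p : ℝ[X]} (hp : p.natDegree ≤ n) (θ : ℝ) :
    ‖(joukowskiLift n p).eval (exp (θ * I))‖ = |p.eval (Real.cos θ)| := by
  simp [eval_joukowskiLift_exp hp, norm_exp_ofReal_mul_I]

lemma exists_eval_zero_eq_one_norm_le_of_cos_le {c : ℝ} (hc : -1 < c) (n : ℕ) :
    ∃ P : ℂ[X], P.eval 0 = 1 ∧
      ∀ θ : ℝ, Real.cos θ ≤ c → ‖P.eval (exp (θ * I))‖ ≤ 2 * ((1 + c) / 2) ^ n := by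
  obtain ⟨p, hdeg, hcoeff, hp⟩ := exists_natDegree_le_coeff_eq_abs_eval_le_one_on_Icc hc n
  set A : ℝ := p.coeff n / 2 ^ n
  have hc' : 0 < 1 + c := by linarith
  have hA : A⁻¹ ≤ 2 * ((1 + c) / 2) ^ n := by
    have h2 : (2 : ℝ) ^ n ≤ 2 * 2 ^ (n - 1) := by cases n <;> simp [pow_succ, mul_comm]
    simp only [A, hcoeff, sub_neg_eq_add, add_comm c]
    rw [inv_div, div_le_iff₀ (by positivity), div_pow, div_pow]
    field_simp
    gcongr
  have hApos : 0 < A := by simp only [A, hcoeff]; positivity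
  refine ⟨C (A⁻¹ : ℂ) * joukowskiLift n p, ?_, fun θ hθ => ?_⟩
  · rw [eval_mul, eval_C, eval_zero_joukowskiLift]
    exact inv_mul_cancel₀ (ofReal_ne_zero.2 hApos.ne')
  · rw [eval_mul, eval_C, norm_mul, norm_eval_joukowskiLift_exp hdeg, norm_inv, norm_real,
      Real.norm_of_nonneg hApos.le]
    exact (mul_le_of_le_one_right (by positivity) (hp _ ⟨Real.neg_one_le_cos θ, hθ⟩)).trans hA

lemma exists_eval_zero_eq_one_norm_lt_of_cos_le {β δ : ℝ} (hβ : β < 1) (hδ : 0 < δ) :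
    ∃ P : ℂ[X], P.eval 0 = 1 ∧ ∀ θ : ℝ, Real.cos θ ≤ β → ‖P.eval (exp (θ * I))‖ < δ := by
  set c := max β 0
  have hc : -1 < c := neg_one_lt_zero.trans_le (le_max_right β 0)
  obtain ⟨n, hn⟩ := exists_pow_lt_of_lt_one (half_pos hδ)
    (by linarith [max_lt hβ one_pos] : (1 + c) / 2 < 1)
  obtain ⟨P, hP0, hP⟩ := exists_eval_zero_eq_one_norm_le_of_cos_le hc n
  refine ⟨P, hP0, fun θ hθ => (hP θ (hθ.trans (le_max_left β 0))).trans_lt ?_⟩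
  linarith

lemma Real.cos_sub_le_neg_cos_of_mem_Icc {a b θ : ℝ} (hlen : b - a ≤ 2 * Real.pi)
    (hθ : θ ∈ Set.Icc a b) : cos (θ - ((a + b) / 2 + Real.pi)) ≤ -cos ((b - a) / 2) := by
  rw [← sub_sub, cos_sub_pi, neg_le_neg_iff, ← cos_abs (θ - (a + b) / 2)]
  exact cos_le_cos_of_nonneg_of_le_pi (abs_nonneg _) (by linarith)
    (abs_le.2 ⟨by linarith [hθ.1], by linarith [hθ.2]⟩)

/-- For every closed arc `J ⊊ 𝕋` (parametrized as the image of
`θ ↦ exp(iθ)` over `[a,b]` with `b - a < 2π`) and every `δ > 0`, there is a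
polynomial `P ∈ ℂ[X]` with `P(0) = 1` and `|P(t)| < δ` for all `t ∈ J`. -/
theorem stmt0 (a b : ℝ) (hab : a ≤ b) (hlen : b - a < 2 * Real.pi)
    (δ : ℝ) (hδ : 0 < δ) :
    ∃ P : Polynomial ℂ, P.eval 0 = 1 ∧
      ∀ t ∈ (fun θ : ℝ => Complex.exp ((θ : ℂ) * Complex.I)) '' Set.Icc a b,
        ‖P.eval t‖ < δ := by
  set μ := (a + b) / 2 + Real.pi
  have hβ : -Real.cos ((b - a) / 2) < 1 := by
    have := Real.cos_lt_cos_of_nonneg_of_le_pi (by linarith) le_rfl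
      (by linarith : (b - a) / 2 < Real.pi)
    rw [Real.cos_pi] at this
    linarith
  obtain ⟨P, hP0, hP⟩ := exists_eval_zero_eq_one_norm_lt_of_cos_le hβ hδ
  refine ⟨P.comp (C (exp (-μ * I)) * X), by simp [hP0], ?_⟩
  rintro _ ⟨θ, hθ, rfl⟩
  have hrot : exp (-μ * I) * exp (θ * I) = exp ((θ - μ : ℝ) * I) := by
    rw [← exp_add]; push_cast; ring_nf
  simp only [eval_comp, eval_mul, eval_C, eval_X, hrot]
  exact hP (θ - μ) (Real.cos_sub_le_neg_cos_of_mem_Icc hlen.le hθ)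
end

section
/- Let ξ : ℤ → ℂ be a sequence attaining values in a finite set X, let δ_X be the minimal distance between distinct points of X, and let n ∈ ℕ and q₀,…,q_{n-1} ∈ ℂ be such that |ξ(m+n) + Σ_{k=0}^{n-1} q_k ξ(m+k)| < δ_X/2 for every m ∈ ℤ. Then the n-tuple (ξ(0),…,ξ(n-1)) uniquely determines ξ(n), and consequently the whole sequence (ξ(m))_{m ≥ 0} is determined by its first n values; moreover ξ restricted to ℕ is eventually periodic with period at most |X|^n. -/
/-!
If two `X`-valued sequences both satisfy the prediction inequality and agree on the `n` values
`ξ(m), …, ξ(m+n-1)`, their values at `m + n` are points of `X` within `δ/2 + δ/2` of the same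
linear combination, hence equal; by induction they agree from `m` on. This gives uniqueness, and
applied to `ξ` and its shift by `N` it gives periodicity as soon as two windows at distance `N`
coincide. Among the `|X|^n + 1` windows starting at `0, …, |X|^n` two must coincide, since there
are only `|X|^n` possible windows.
-/

open Finset

section Window

variable {α : Type*} {n : ℕ}

theorem eq_of_window_eq_of_step {f g : ℤ → α}
    (hstep : ∀ m : ℤ, (∀ k : Fin n, f (m + k) = g (m + k)) → f (m + n) = g (m + n))
    (a : ℤ) (hwin : ∀ k : Fin n, f (a + k) = g (a + k)) :
    ∀ m : ℤ, a ≤ m → f m = g m := by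
  suffices h : ∀ j : ℕ, f (a + j) = g (a + j) by
    intro m hm
    have := h (m - a).toNat
    rwa [Int.toNat_of_nonneg (sub_nonneg.2 hm), add_sub_cancel] at this
  intro j
  induction j using Nat.strong_induction_on with
  | _ j ih =>
    by_cases hj : j < n
    · exact hwin ⟨j, hj⟩
    · have h := hstep (a + (j - n : ℕ)) fun k => by
        have := ih (j - n + k) (by omega)
        push_cast at this ⊢
        rwa [add_assoc]
      rwa [add_assoc, ← Nat.cast_add, Nat.sub_add_cancel (not_lt.1 hj)] at h

theorem exists_lt_le_card_pow_window_eq (X : Finset α) (ξ : ℤ → α) (hval : ∀ m, ξ m ∈ X) :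
    ∃ a b : ℕ, a < b ∧ b ≤ #X ^ n ∧
      ∀ k : Fin n, ξ ((a : ℤ) + k) = ξ ((b : ℤ) + k) := by
  have hmaps : ∀ m ∈ range (#X ^ n + 1),
      (fun k : Fin n => ξ ((m : ℤ) + k)) ∈ Fintype.piFinset fun _ : Fin n => X :=
    fun m _ => Fintype.mem_piFinset.2 fun k => hval _
  obtain ⟨a, ha, b, hb, hab, hwin⟩ := exists_ne_map_eq_of_card_lt_of_maps_to
    (by simp [Fintype.card_piFinset]) hmaps
  rw [mem_range] at ha hb
  rcases Nat.lt_or_gt_of_ne hab with h | h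
  · exact ⟨a, b, h, by omega, congrFun hwin⟩
  · exact ⟨b, a, h, by omega, fun k => (congrFun hwin k).symm⟩

end Window

section Prediction

variable {n : ℕ}

def PredictsWithin (q : Fin n → ℂ) (ε : ℝ) (ξ : ℤ → ℂ) : Prop :=
  ∀ m : ℤ, ‖ξ (m + n) + ∑ k : Fin n, q k * ξ (m + k)‖ < ε

theorem PredictsWithin.comp_add_right {q : Fin n → ℂ} {ε : ℝ} {ξ : ℤ → ℂ}
    (h : PredictsWithin q ε ξ) (c : ℤ) : PredictsWithin q ε fun t => ξ (t + c) := by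
  intro m
  simpa only [add_right_comm _ _ c] using h (m + c)

theorem PredictsWithin.eq_of_window_eq {X : Finset ℂ} {δ : ℝ}
    (hsep : ∀ z ∈ X, ∀ w ∈ X, z ≠ w → δ ≤ ‖z - w‖) {q : Fin n → ℂ} {ξ₁ ξ₂ : ℤ → ℂ}
    (hval₁ : ∀ m, ξ₁ m ∈ X) (hval₂ : ∀ m, ξ₂ m ∈ X)
    (h₁ : PredictsWithin q (δ / 2) ξ₁) (h₂ : PredictsWithin q (δ / 2) ξ₂)
    (m : ℤ) (hwin : ∀ k : Fin n, ξ₁ (m + k) = ξ₂ (m + k)) : ξ₁ (m + n) = ξ₂ (m + n) := by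
  by_contra hne
  have hsum : ∑ k : Fin n, q k * ξ₁ (m + k) = ∑ k : Fin n, q k * ξ₂ (m + k) :=
    sum_congr rfl fun k _ => by rw [hwin k]
  have hclose : ‖ξ₁ (m + n) - ξ₂ (m + n)‖ < δ :=
    calc ‖ξ₁ (m + n) - ξ₂ (m + n)‖
        = ‖(ξ₁ (m + n) + ∑ k : Fin n, q k * ξ₁ (m + k))
            - (ξ₂ (m + n) + ∑ k : Fin n, q k * ξ₂ (m + k))‖ := by
          rw [hsum, add_sub_add_right_eq_sub]
      _ ≤ ‖ξ₁ (m + n) + ∑ k : Fin n, q k * ξ₁ (m + k)‖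
            + ‖ξ₂ (m + n) + ∑ k : Fin n, q k * ξ₂ (m + k)‖ := norm_sub_le _ _
      _ < δ / 2 + δ / 2 := add_lt_add (h₁ m) (h₂ m)
      _ = δ := add_halves δ
  exact hclose.not_ge (hsep _ (hval₁ _) _ (hval₂ _) hne)

end Prediction

theorem stmt3_general (X : Finset ℂ) (δ : ℝ)
    (hsep : ∀ z ∈ X, ∀ w ∈ X, z ≠ w → δ ≤ ‖z - w‖)
    (n : ℕ) (q : Fin n → ℂ) (ξ : ℤ → ℂ) (hval : ∀ m, ξ m ∈ X)
    (hpred : ∀ m : ℤ,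
      ‖ξ (m + n) + ∑ k : Fin n, q k * ξ (m + (k : ℤ))‖ < δ / 2) :
    (∀ ξ' : ℤ → ℂ, (∀ m, ξ' m ∈ X) →
      (∀ m : ℤ, ‖ξ' (m + n) + ∑ k : Fin n, q k * ξ' (m + (k : ℤ))‖ < δ / 2) →
      (∀ k : Fin n, ξ' (k : ℤ) = ξ (k : ℤ)) →
      ∀ m : ℤ, 0 ≤ m → ξ' m = ξ m) ∧
    ∃ N : ℕ, 1 ≤ N ∧ N ≤ X.card ^ n ∧
      ∃ m₀ : ℕ, ∀ m : ℕ, m₀ ≤ m → ξ ((m : ℤ) + N) = ξ (m : ℤ) := by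
  have hpred : PredictsWithin q (δ / 2) ξ := hpred
  refine ⟨fun ξ' hval' hpred' h0 => ?_, ?_⟩
  · exact eq_of_window_eq_of_step (PredictsWithin.eq_of_window_eq hsep hval' hval hpred' hpred)
      0 (by simpa using h0)
  · obtain ⟨a, b, hab, hb, hwin⟩ := exists_lt_le_card_pow_window_eq (n := n) X ξ hval
    refine ⟨b - a, by omega, by omega, a, fun m hm => ?_⟩
    refine eq_of_window_eq_of_step
      ((hpred.comp_add_right _).eq_of_window_eq hsep (fun _ => hval _) hval hpred) a
      (fun k => ?_) m (by exact_mod_cast hm)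
    rw [hwin k, Nat.cast_sub hab.le]
    congr 1
    ring

/-- δ-prediction determines the sequence: Let `ξ : ℤ → X ⊂ ℂ`
with `X` finite and `δ`-separated (`δ > 0`), and suppose
`|ξ(m+n) + Σ_{k<n} q_k ξ(m+k)| < δ/2` for all `m`. Then the values
`ξ(0),…,ξ(n-1)` determine `ξ(m)` for all `m ≥ 0` (any other sequence with the
same prediction property, values in `X`, and the same first `n` values agrees
with `ξ` on `m ≥ 0`), and `ξ` restricted to `ℕ` is eventually periodic with
period at most `|X|^n`. -/
theorem stmt3 (X : Finset ℂ) (δ : ℝ) (hδpos : 0 < δ)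
    (hsep : ∀ z ∈ X, ∀ w ∈ X, z ≠ w → δ ≤ ‖z - w‖)
    (n : ℕ) (q : Fin n → ℂ) (ξ : ℤ → ℂ) (hval : ∀ m, ξ m ∈ X)
    (hpred : ∀ m : ℤ,
      ‖ξ (m + n) + ∑ k : Fin n, q k * ξ (m + (k : ℤ))‖ < δ / 2) :
    (∀ ξ' : ℤ → ℂ, (∀ m, ξ' m ∈ X) →
      (∀ m : ℤ, ‖ξ' (m + n) + ∑ k : Fin n, q k * ξ' (m + (k : ℤ))‖ < δ / 2) →
      (∀ k : Fin n, ξ' (k : ℤ) = ξ (k : ℤ)) →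
      ∀ m : ℤ, 0 ≤ m → ξ' m = ξ m) ∧
    ∃ N : ℕ, 1 ≤ N ∧ N ≤ X.card ^ n ∧
      ∃ m₀ : ℕ, ∀ m : ℕ, m₀ ≤ m → ξ ((m : ℤ) + N) = ξ (m : ℤ) :=
  stmt3_general X δ hsep n q ξ hval hpred
end

section
/- For every n, the primitive n-th roots of unity include a point in any arc of 𝕋 of length greater than 2π·(gap), where the maximal gap between consecutive primitive n-th roots of unity tends to 0 as n → ∞; concretely: for every δ > 0 there is n₀ such that for all n ≥ n₀, every arc of 𝕋 of length δ contains a primitive n-th root of unity. -/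
/-!
By Möbius inversion, the number of integers in `(a, b]` coprime to `n` is `(b - a) φ(n) / n` up to
an error of at most `∑_{d ∣ n} |μ d| ≤ 2 ^ ω(n)`, and `φ(n) / n ≥ 2 ^ (-ω(n))`. Hence every
interval of length more than `4 ^ ω(n)` contains an integer coprime to `n`. At most six primes lie
below `16`, so `16 ^ ω(n) ≤ 16 ^ 6 n`, i.e. `4 ^ ω(n) = O(√n)`: the gaps between the angles
`2πk/n` with `gcd(k, n) = 1` tend to `0`.
-/

open Finset ArithmeticFunction Filter Topology
open scoped ArithmeticFunction.Moebius Nat Real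

theorem ArithmeticFunction.sum_divisors_moebius (m : ℕ) :
    ∑ d ∈ m.divisors, μ d = if m = 1 then 1 else 0 := by
  rw [← coe_mul_zeta_apply, moebius_mul_coe_zeta, one_apply]

theorem ArithmeticFunction.sum_divisors_moebius_filter_dvd {n : ℕ} (hn : n ≠ 0) (k : ℤ) :
    ∑ d ∈ n.divisors with ((d : ℕ) : ℤ) ∣ k, μ d = if k.gcd n = 1 then 1 else 0 := by
  have : {d ∈ n.divisors | ((d : ℕ) : ℤ) ∣ k} = (k.gcd n).divisors := by
    ext d
    simp [Int.dvd_gcd_iff, Int.gcd_eq_zero_iff, Int.natCast_dvd_natCast, hn, and_comm]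
  rw [this, sum_divisors_moebius]

theorem card_filter_gcd_eq_one_eq_sum_moebius {n : ℕ} (hn : n ≠ 0) (s : Finset ℤ) :
    (#{k ∈ s | k.gcd n = 1} : ℤ) = ∑ d ∈ n.divisors, μ d * #{k ∈ s | (d : ℤ) ∣ k} := by
  simp_rw [card_filter, Nat.cast_sum, Nat.cast_ite, Nat.cast_one, Nat.cast_zero,
    ← sum_divisors_moebius_filter_dvd hn, sum_filter, mul_sum, mul_ite, mul_one, mul_zero]
  exact sum_comm

theorem abs_card_Ioc_filter_dvd_sub_le {a b : ℤ} (hab : a ≤ b) {d : ℕ} (hd : 0 < d) :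
    |(#{k ∈ Ioc a b | (d : ℤ) ∣ k} : ℝ) - (b - a) / d| ≤ 1 := by
  have hcard : (#{k ∈ Ioc a b | (d : ℤ) ∣ k} : ℤ) = ⌊(b : ℝ) / d⌋ - ⌊(a : ℝ) / d⌋ := by
    have hfloor : ⌊(a : ℚ) / (d : ℤ)⌋ ≤ ⌊(b : ℚ) / (d : ℤ)⌋ := by gcongr
    rw [Int.Ioc_filter_dvd_card a b (by exact_mod_cast hd), max_eq_left (by omega),
      ← Rat.floor_cast (α := ℝ), ← Rat.floor_cast (α := ℝ)]
    push_cast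
    rfl
  rw [← Int.cast_natCast, hcard, abs_le]
  push_cast
  constructor <;> linarith [Int.floor_le ((b : ℝ) / d), Int.lt_floor_add_one ((b : ℝ) / d),
    Int.floor_le ((a : ℝ) / d), Int.lt_floor_add_one ((a : ℝ) / d), sub_div (b : ℝ) a d]

theorem sum_divisors_moebius_div_eq_totient_div (n : ℕ) :
    ∑ d ∈ n.divisors, (μ d : ℝ) / d = φ n / n := by
  rcases n.eq_zero_or_pos with rfl | hn
  · simp
  have hinv := (sum_eq_iff_sum_mul_moebius_eq (R := ℝ) (f := fun m ↦ (φ m : ℝ))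
    (g := fun m ↦ (m : ℝ))).1 (fun m _ ↦ by exact_mod_cast Nat.sum_totient m) n hn
  rw [Nat.sum_divisorsAntidiagonal (f := fun d e ↦ (μ d : ℝ) * e)] at hinv
  rw [← hinv, sum_div]
  refine sum_congr rfl fun d hd ↦ ?_
  have hd0 : (d : ℝ) ≠ 0 := by exact_mod_cast (Nat.pos_of_mem_divisors hd).ne'
  rw [Nat.cast_div (Nat.dvd_of_mem_divisors hd) hd0]
  field_simp

theorem sum_divisors_abs_moebius_le (n : ℕ) :
    ∑ d ∈ n.divisors, |(μ d : ℝ)| ≤ 2 ^ n.primeFactors.card := by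
  have hsum : ∑ d ∈ n.divisors, |(μ d : ℝ)| = #{d ∈ n.divisors | Squarefree d} := by
    simp [← Int.cast_abs, abs_moebius, apply_ite]
  have hinj : #{d ∈ n.divisors | Squarefree d} ≤ #n.primeFactors.powerset := by
    refine card_le_card_of_injOn Nat.primeFactors (fun d hd ↦ ?_) fun d₁ hd₁ d₂ hd₂ h ↦ ?_
    · rw [mem_coe, mem_filter, Nat.mem_divisors] at hd
      simpa using Nat.primeFactors_mono hd.1.1 hd.1.2
    · rw [mem_coe, mem_filter] at hd₁ hd₂
      rw [← Nat.prod_primeFactors_of_squarefree hd₁.2,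
        ← Nat.prod_primeFactors_of_squarefree hd₂.2, h]
  rw [card_powerset] at hinj
  rw [hsum]
  exact_mod_cast hinj

theorem div_two_pow_card_primeFactors_le_totient (n : ℕ) :
    (n : ℝ) / 2 ^ n.primeFactors.card ≤ φ n := by
  have euler := congrArg (Rat.cast (K := ℝ)) (Nat.totient_eq_mul_prod_factors n)
  push_cast at euler
  rw [euler, div_eq_mul_inv, ← inv_pow, ← prod_const]
  gcongr with p hp
  have hp2 : (2 : ℝ) ≤ p := by exact_mod_cast (Nat.prime_of_mem_primeFactors hp).two_le
  linarith [inv_anti₀ two_pos hp2]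

theorem abs_card_filter_gcd_eq_one_Ioc_sub_le {n : ℕ} (hn : n ≠ 0) {a b : ℤ} (hab : a ≤ b) :
    |(#{k ∈ Ioc a b | k.gcd n = 1} : ℝ) - (b - a) * φ n / n| ≤ 2 ^ n.primeFactors.card := by
  have hcount : (#{k ∈ Ioc a b | k.gcd n = 1} : ℝ) =
      ∑ d ∈ n.divisors, (μ d : ℝ) * #{k ∈ Ioc a b | (d : ℤ) ∣ k} := by
    exact_mod_cast card_filter_gcd_eq_one_eq_sum_moebius hn (Ioc a b)
  rw [hcount, mul_div_assoc, ← sum_divisors_moebius_div_eq_totient_div, mul_sum, ← sum_sub_distrib]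
  calc |∑ d ∈ n.divisors, ((μ d : ℝ) * #{k ∈ Ioc a b | (d : ℤ) ∣ k} - (b - a) * (μ d / d))|
      ≤ ∑ d ∈ n.divisors, |(μ d : ℝ)| * |#{k ∈ Ioc a b | (d : ℤ) ∣ k} - ((b : ℝ) - a) / d| := by
        refine (abs_sum_le_sum_abs _ _).trans_eq (sum_congr rfl fun d _ ↦ ?_)
        rw [← abs_mul]
        ring_nf
    _ ≤ ∑ d ∈ n.divisors, |(μ d : ℝ)| := by
        refine sum_le_sum fun d hd ↦ mul_le_of_le_one_right (abs_nonneg _) ?_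
        exact abs_card_Ioc_filter_dvd_sub_le hab (Nat.pos_of_mem_divisors hd)
    _ ≤ 2 ^ n.primeFactors.card := sum_divisors_abs_moebius_le n

theorem exists_gcd_eq_one_mem_Ioc {n : ℕ} (hn : n ≠ 0) {a b : ℤ}
    (h : (4 : ℝ) ^ n.primeFactors.card < b - a) : ∃ k ∈ Ioc a b, k.gcd n = 1 := by
  have hba : (0 : ℝ) < b - a := lt_of_le_of_lt (by positivity) h
  have hab : a ≤ b := by
    have : (a : ℝ) ≤ b := by linarith
    exact_mod_cast this
  have htot := div_two_pow_card_primeFactors_le_totient n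
  have herr := (abs_le.1 (abs_card_filter_gcd_eq_one_Ioc_sub_le hn hab)).1
  set w := (2 : ℝ) ^ n.primeFactors.card
  have hw : 0 < w := by positivity
  have h4 : (4 : ℝ) ^ n.primeFactors.card = w * w := by rw [← mul_pow]; norm_num
  have hmain : (b - a) / w ≤ (b - a) * φ n / n := by
    rw [mul_div_assoc, div_eq_mul_inv]
    gcongr
    rwa [le_div_iff₀ (by positivity), inv_mul_eq_div]
  have hpos : (0 : ℝ) < #{k ∈ Ioc a b | k.gcd n = 1} := by
    have : w < (b - a) / w := by rw [lt_div_iff₀ hw]; linarith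
    linarith
  obtain ⟨k, hk⟩ := card_pos.1 (by exact_mod_cast hpos)
  exact ⟨k, (mem_filter.1 hk).1, (mem_filter.1 hk).2⟩

theorem sixteen_pow_card_primeFactors_le {n : ℕ} (hn : n ≠ 0) :
    16 ^ n.primeFactors.card ≤ 16 ^ 6 * n := by
  rw [← card_filter_add_card_filter_not (· < 16), pow_add]
  refine Nat.mul_le_mul (Nat.pow_le_pow_right (by norm_num) ?_) ?_
  · calc #{p ∈ n.primeFactors | p < 16} ≤ #{p ∈ range 16 | p.Prime} := by
          refine card_le_card fun p hp ↦ ?_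
          rw [mem_filter, Nat.mem_primeFactors] at hp
          exact mem_filter.2 ⟨mem_range.2 hp.2, hp.1.1⟩
      _ = 6 := by decide
  · calc 16 ^ #{p ∈ n.primeFactors | ¬p < 16} ≤ ∏ p ∈ n.primeFactors with ¬p < 16, p :=
          pow_card_le_prod _ _ _ fun p hp ↦ not_lt.1 (mem_filter.1 hp).2
      _ ≤ n := Nat.le_of_dvd (Nat.pos_of_ne_zero hn)
          ((prod_dvd_prod_of_subset _ _ _ (filter_subset _ _)).trans (Nat.prod_primeFactors_dvd n))

theorem four_pow_card_primeFactors_le_sqrt {n : ℕ} (hn : n ≠ 0) :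
    (4 : ℝ) ^ n.primeFactors.card ≤ 4 ^ 6 * √n := by
  rw [← Real.sqrt_sq (by positivity : (0 : ℝ) ≤ 4 ^ n.primeFactors.card),
    ← Real.sqrt_sq (by positivity : (0 : ℝ) ≤ 4 ^ 6), ← Real.sqrt_mul (by positivity)]
  gcongr
  rw [← pow_mul, ← pow_mul, mul_comm, pow_mul, pow_mul]
  norm_num
  exact_mod_cast sixteen_pow_card_primeFactors_le hn

theorem tendsto_four_pow_card_primeFactors_div_atTop :
    Tendsto (fun n : ℕ ↦ (4 : ℝ) ^ n.primeFactors.card / n) atTop (𝓝 0) := by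
  have hsqrt : Tendsto (fun n : ℕ ↦ (4 : ℝ) ^ 6 / √n) atTop (𝓝 0) :=
    tendsto_const_nhds.div_atTop (Real.tendsto_sqrt_atTop.comp tendsto_natCast_atTop_atTop)
  refine squeeze_zero (fun n ↦ by positivity) (fun n ↦ ?_) hsqrt
  rcases eq_or_ne n 0 with rfl | hn
  · simp
  calc (4 : ℝ) ^ n.primeFactors.card / n ≤ 4 ^ 6 * √n / n := by
        gcongr
        exact four_pow_card_primeFactors_le_sqrt hn
    _ = 4 ^ 6 / √n := by rw [mul_div_assoc, Real.sqrt_div_self', mul_one_div]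

theorem exists_gcd_eq_one_mem_Icc {n : ℕ} (hn : n ≠ 0) {x y : ℝ}
    (h : (4 : ℝ) ^ n.primeFactors.card + 1 < y - x) : ∃ k : ℤ, k.gcd n = 1 ∧ x ≤ k ∧ k ≤ y := by
  obtain ⟨k, hk, hcop⟩ := exists_gcd_eq_one_mem_Ioc hn (a := ⌈x⌉ - 1) (b := ⌊y⌋) (by
    push_cast
    linarith [Int.ceil_lt_add_one x, Int.sub_one_lt_floor y])
  rw [mem_Ioc] at hk
  exact ⟨k, hcop, Int.ceil_le.1 (by omega), Int.le_floor.1 hk.2⟩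

open Complex in
theorem Complex.isPrimitiveRoot_exp_of_gcd_eq_one {n : ℕ} (hn : n ≠ 0) {k : ℤ} (hk : k.gcd n = 1) :
    IsPrimitiveRoot (exp (↑(2 * π * k / n) * I)) n := by
  rw [show (↑(2 * π * k / n) * I : ℂ) = k * (2 * π * I / n) by push_cast; ring, exp_int_mul]
  exact (isPrimitiveRoot_exp n hn).zpow_of_gcd_eq_one k hk

/-- For every `δ > 0` there is `n₀` such that for all `n ≥ n₀`,
every arc of the unit circle of length `δ` contains a primitive `n`-th root of
unity. -/
theorem stmt11 (δ : ℝ) (hδ : 0 < δ) :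
    ∃ n₀ : ℕ, ∀ n : ℕ, n₀ ≤ n → ∀ a : ℝ,
      ∃ z : ℂ, IsPrimitiveRoot z n ∧
        z ∈ (fun θ : ℝ => Complex.exp ((θ : ℂ) * Complex.I)) '' Set.Icc a (a + δ) := by
  have hgap : ∀ᶠ n : ℕ in atTop, (4 : ℝ) ^ n.primeFactors.card / n + 1 / n < δ / (2 * π) := by
    have h := tendsto_four_pow_card_primeFactors_div_atTop.add tendsto_one_div_atTop_nhds_zero_nat
    rw [add_zero] at h
    exact h.eventually (gt_mem_nhds (by positivity))
  obtain ⟨n₀, hn₀⟩ := eventually_atTop.1 (hgap.and (eventually_ne_atTop 0))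
  refine ⟨n₀, fun n hn a ↦ ?_⟩
  obtain ⟨hlt, hn0⟩ := hn₀ n hn
  have hn' : (0 : ℝ) < n := by positivity
  rw [← add_div, div_lt_div_iff₀ hn' (by positivity)] at hlt
  obtain ⟨k, hk, hak, hkb⟩ := exists_gcd_eq_one_mem_Icc hn0
    (x := a * n / (2 * π)) (y := (a + δ) * n / (2 * π)) (by
      rw [← sub_div, lt_div_iff₀ (by positivity)]
      linarith)
  refine ⟨_, Complex.isPrimitiveRoot_exp_of_gcd_eq_one hn0 hk, 2 * π * k / n, ⟨?_, ?_⟩, rfl⟩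
  · rw [div_le_iff₀ (by positivity)] at hak
    rw [le_div_iff₀ hn']
    linarith
  · rw [le_div_iff₀ (by positivity)] at hkb
    rw [div_le_iff₀ hn']
    linarith
end
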